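/- Let G be a triangle-free simple graph with maximum degree at most 4 containing a path x–y–z on three distinct vertices, each of degree exactly 3, such that the third neighbor y₁ of y (y₁ ∉ {x, z}) has degree exactly 4. Set S = {x, y, z}. If the S-reduced graph G*S admits a 2-PCF 9-coloring, then G admits a 2-PCF 9-coloring. (This shows a vertex-minimum counterexample has no path on three 3-vertices whose middle vertex is adjacent to a 4-vertex.) -/

import Mathlib

/-- An `h`-PCF coloring of `G`: a proper coloring `φ` such that for every vertex `v`,
at least `min h (d_G(v))` colors appear on exactly one neighbor of `v`. -/
def SimpleGraph.IsPCFColoring {V α : Type*} (G : SimpleGraph V) (h : ℕ)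
    (φ : V → α) : Prop :=
  (∀ ⦃u w : V⦄, G.Adj u w → φ u ≠ φ w) ∧
  ∀ v : V, min h {u | G.Adj v u}.ncard ≤
    {c : α | {u | G.Adj v u ∧ φ u = c}.ncard = 1}.ncard

/-- `G` admits an `h`-PCF `k`-coloring. -/
def SimpleGraph.HasPCFColoring {V : Type*} (G : SimpleGraph V) (h k : ℕ) : Prop :=
  ∃ φ : V → Fin k, G.IsPCFColoring h φ

/-- The `S`-reduced graph `G*S`: delete `S`, and join two distinct nonadjacent
vertices outside `S` that have a common neighbor in `S` (vertices of `S`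
remain as isolated vertices). -/
def SimpleGraph.reduce {V : Type*} (G : SimpleGraph V) (S : Set V) :
    SimpleGraph V where
  Adj u w := u ∉ S ∧ w ∉ S ∧ u ≠ w ∧
    (G.Adj u w ∨ ∃ s ∈ S, G.Adj u s ∧ G.Adj s w)
  symm := by
    constructor
    rintro u w ⟨hu, hw, hne, h | ⟨s, hs, h1, h2⟩⟩
    · exact ⟨hw, hu, hne.symm, Or.inl h.symm⟩
    · exact ⟨hw, hu, hne.symm, Or.inr ⟨s, hs, h2.symm, h1.symm⟩⟩
  loopless := ⟨fun u h => h.2.2.1 rfl⟩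

/-!
Keep `φ` off `S = {x, y, z}` and recolor only `x`, `y`, `z`. A vertex with no neighbor in `S`
keeps its neighborhood. In `G*S` the neighbors of `y₁` are its three neighbors other than `y`;
two unique colors among three vertices force three distinct colors, so `y₁` keeps two unique
colors whatever `y` gets. A neighbor `v ≠ y` of `x` alone sees, in `G*S`, the other outer
neighbor of `x` in place of `x`; as `v` has at most three further neighbors, all but at most two
colors of `x` leave `v` enough unique colors (symmetrically for `z`, and a common neighbor of `x`
and `z` only needs their colors to avoid its at most two further colors). So `x` and `z` must
each avoid at most `3 + 2 + 2 = 7` colors and `y` at most `5`, and with nine colors a greedy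
choice succeeds.
-/

open Set

section UniqueColors

variable {V α : Type*} {f g : V → α} {N : Set V} {p q w : V} {c : α}

def uniqueColors (f : V → α) (N : Set V) : Set α :=
  {c | {u ∈ N | f u = c}.ncard = 1}

theorem uniqueColors_congr (h : EqOn f g N) : uniqueColors f N = uniqueColors g N := by
  have hfib : ∀ c, {u ∈ N | f u = c} = {u ∈ N | g u = c} := fun c =>
    Set.ext fun u => and_congr_right fun hu => by rw [h hu]
  simp only [uniqueColors, hfib]

theorem apply_mem_uniqueColors (hw : w ∈ N) (h : ∀ u ∈ N, f u = f w → u = w) :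
    f w ∈ uniqueColors f N :=
  ncard_eq_one.mpr
    ⟨w, Set.ext fun u => ⟨fun hu => h u hu.1 hu.2, by rintro rfl; exact ⟨hw, rfl⟩⟩⟩

theorem uniqueColors_subset_image : uniqueColors f N ⊆ f '' N := fun c hc => by
  obtain ⟨w, hw⟩ := ncard_eq_one.mp hc
  exact ⟨w, (hw ▸ rfl : w ∈ {u ∈ N | f u = c})⟩

theorem uniqueColors_eq_image_of_injOn (h : InjOn f N) : uniqueColors f N = f '' N :=
  uniqueColors_subset_image.antisymm <| by
    rintro _ ⟨w, hw, rfl⟩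
    exact apply_mem_uniqueColors hw fun u hu hfu => h hu hw hfu

theorem ncard_uniqueColors_of_injOn (h : InjOn f N) : (uniqueColors f N).ncard = N.ncard := by
  rw [uniqueColors_eq_image_of_injOn h, h.ncard_image]

theorem min_le_ncard_uniqueColors_of_injOn (h : InjOn f N) (k : ℕ) :
    min k N.ncard ≤ (uniqueColors f N).ncard :=
  (ncard_uniqueColors_of_injOn h).symm ▸ min_le_right _ _

theorem mem_uniqueColors_insert_iff_of_ne (h : c ≠ f p) :
    c ∈ uniqueColors f (insert p N) ↔ c ∈ uniqueColors f N := by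
  have hfib : {u ∈ insert p N | f u = c} = {u ∈ N | f u = c} :=
    Set.ext fun u => ⟨fun ⟨hu, hfu⟩ => ⟨hu.resolve_left (by rintro rfl; exact h hfu.symm), hfu⟩,
      fun ⟨hu, hfu⟩ => ⟨Or.inr hu, hfu⟩⟩
  simp only [uniqueColors, mem_ofPred_eq, hfib]

theorem uniqueColors_insert_subset :
    uniqueColors f (insert p N) ⊆ insert (f p) (uniqueColors f N) :=
  fun c hc => (eq_or_ne c (f p)).imp id fun h => (mem_uniqueColors_insert_iff_of_ne h).mp hc

theorem uniqueColors_insert_of_notMem_image (h : f p ∉ f '' N) :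
    uniqueColors f (insert p N) = insert (f p) (uniqueColors f N) := by
  refine uniqueColors_insert_subset.antisymm (insert_subset ?_ fun c hc => ?_)
  · exact apply_mem_uniqueColors (mem_insert p N) fun u hu hfu =>
      hu.resolve_right fun huN => h ⟨u, huN, hfu⟩
  · refine (mem_uniqueColors_insert_iff_of_ne ?_).mpr hc
    rintro rfl
    exact h (uniqueColors_subset_image hc)

variable [Finite V]

theorem uniqueColors_finite : (uniqueColors f N).Finite :=
  ((toFinite N).image f).subset uniqueColors_subset_image

theorem ncard_uniqueColors_insert_le_add_one :
    (uniqueColors f (insert p N)).ncard ≤ (uniqueColors f N).ncard + 1 :=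
  (ncard_le_ncard uniqueColors_insert_subset (uniqueColors_finite.insert _)).trans
    (ncard_insert_le _ _)

theorem ncard_uniqueColors_le_insert_add_one :
    (uniqueColors f N).ncard ≤ (uniqueColors f (insert p N)).ncard + 1 := by
  have hsub : uniqueColors f N \ {f p} ⊆ uniqueColors f (insert p N) := fun c ⟨hc, hcp⟩ =>
    (mem_uniqueColors_insert_iff_of_ne hcp).mpr hc
  calc (uniqueColors f N).ncard ≤ (uniqueColors f N \ {f p}).ncard + 1 := by
        have := pred_ncard_le_ncard_sdiff_singleton (uniqueColors f N) (f p); omega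
    _ ≤ _ := by grw [ncard_le_ncard hsub uniqueColors_finite]

theorem ncard_uniqueColors_insert_of_notMem_image (h : f p ∉ f '' N) :
    (uniqueColors f (insert p N)).ncard = (uniqueColors f N).ncard + 1 := by
  rw [uniqueColors_insert_of_notMem_image h,
    ncard_insert_of_notMem (fun hp => h (uniqueColors_subset_image hp)) uniqueColors_finite]

theorem ncard_uniqueColors_add_two_le_of_not_injOn (h : ¬ InjOn f N) :
    (uniqueColors f N).ncard + 2 ≤ N.ncard := by
  obtain ⟨u, hu, w, hw, hfuw, huw⟩ : ∃ u ∈ N, ∃ w ∈ N, f u = f w ∧ u ≠ w := by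
    simpa [InjOn] using h
  have hsub : uniqueColors f N ⊆ f '' (N \ {u, w}) := by
    intro c hc
    obtain ⟨t, ht⟩ := ncard_eq_one.mp hc
    have hfib : ∀ r ∈ N, f r = c → r = t := fun r hr hrc => by
      simpa using (ht ▸ ⟨hr, hrc⟩ : r ∈ ({t} : Set V))
    have htN : t ∈ {r ∈ N | f r = c} := ht ▸ rfl
    refine ⟨t, ⟨htN.1, ?_⟩, htN.2⟩
    rintro (rfl | rfl)
    · exact huw (hfib w hw (hfuw ▸ htN.2)).symm
    · exact huw (hfib u hu (hfuw ▸ htN.2))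
  have hpair : {u, w} ⊆ N := insert_subset hu (singleton_subset_iff.mpr hw)
  have := ncard_sdiff_add_ncard_of_subset hpair
  rw [ncard_pair huw] at this
  have := (ncard_le_ncard hsub).trans (ncard_image_le (f := f) (s := N \ {u, w}))
  omega

/- If `f` takes at most two values on `N`, forbidding them makes the new color unique and keeps
the old unique colors; otherwise `f` is injective on the three vertices of `N`. -/
theorem exists_forbidden_finset_of_insert (f : V → α) (hN : N.ncard ≤ 3)
    (hf : min 2 (N.ncard + 1) ≤ (uniqueColors f (insert p N)).ncard) :
    ∃ F : Finset α, F.card ≤ 2 ∧ ∀ (g : V → α) (q : V), EqOn g f N → g q ∉ F →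
      min 2 (N.ncard + 1) ≤ (uniqueColors g (insert q N)).ncard := by
  by_cases hsmall : (f '' N).ncard ≤ 2
  · refine ⟨(toFinite (f '' N)).toFinset, by rwa [← ncard_eq_toFinset_card _ (toFinite _)],
      fun g q hg hq => ?_⟩
    rw [Finite.mem_toFinset, ← hg.image_eq] at hq
    rw [ncard_uniqueColors_insert_of_notMem_image hq, uniqueColors_congr hg]
    exact hf.trans ncard_uniqueColors_insert_le_add_one
  · have hle : (f '' N).ncard ≤ N.ncard := ncard_image_le
    have hinj : InjOn f N := injOn_of_ncard_image_eq (by omega)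
    refine ⟨∅, by simp, fun g q hg _ => ?_⟩
    have := ncard_uniqueColors_le_insert_add_one (f := g) (N := N) (p := q)
    rw [uniqueColors_congr hg, ncard_uniqueColors_of_injOn hinj] at this
    omega

theorem two_le_ncard_uniqueColors_insert_insert (hp : f p ∉ f '' N)
    (hq : f q ∉ f '' N) (hpq : f p ≠ f q) : 2 ≤ (uniqueColors f (insert p (insert q N))).ncard := by
  have hp' : f p ∉ f '' insert q N := by
    rw [image_insert_eq]; exact fun h => h.elim hpq hp
  rw [ncard_uniqueColors_insert_of_notMem_image hp', ncard_uniqueColors_insert_of_notMem_image hq]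
  omega

end UniqueColors

namespace SimpleGraph

variable {V α : Type*} {G : SimpleGraph V} {S : Set V} {s t u v w : V} {φ ψ : V → α} {k : ℕ}

def PCFAt (G : SimpleGraph V) (k : ℕ) (f : V → α) (v : V) : Prop :=
  min k (G.neighborSet v).ncard ≤ (uniqueColors f (G.neighborSet v)).ncard

theorem not_adj_of_cliqueFree_three (htf : G.CliqueFree 3) (hvu : G.Adj v u) (hvw : G.Adj v w) :
    ¬ G.Adj u w :=
  fun h => isIndepSet_neighborSet_of_triangleFree G htf v hvu hvw h.ne h

theorem reduce_neighborSet_of_forall_not_adj (hv : v ∉ S) (h : ∀ s ∈ S, ¬ G.Adj v s) :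
    (G.reduce S).neighborSet v = G.neighborSet v := by
  ext u
  refine ⟨?_, fun hu => ⟨hv, fun huS => h u huS hu, hu.ne, Or.inl hu⟩⟩
  rintro ⟨-, -, -, hu | ⟨s, hs, hvs, -⟩⟩
  exacts [hu, (h s hs hvs).elim]

theorem reduce_neighborSet_of_unique_adj (hv : v ∉ S) (hs : s ∈ S) (hvs : G.Adj v s)
    (huniq : ∀ t ∈ S, G.Adj v t → t = s) :
    (G.reduce S).neighborSet v = (G.neighborSet v \ {s}) ∪ ((G.neighborSet s \ S) \ {v}) := by
  ext u
  simp only [mem_neighborSet, reduce, mem_union, mem_sdiff, mem_singleton_iff]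
  constructor
  · rintro ⟨-, huS, hvu, hu | ⟨t, ht, hvt, htu⟩⟩
    · exact Or.inl ⟨hu, by rintro rfl; exact huS hs⟩
    · obtain rfl := huniq t ht hvt
      exact Or.inr ⟨⟨htu, huS⟩, Ne.symm hvu⟩
  · rintro (⟨hu, hus⟩ | ⟨⟨hsu, huS⟩, huv⟩)
    · exact ⟨hv, fun huS => hus (huniq u huS hu), hu.ne, Or.inl hu⟩
    · exact ⟨hv, huS, Ne.symm huv, Or.inr ⟨s, hs, hvs, hsu⟩⟩

theorem injOn_neighborSet_sdiff_of_reduce (hφ : ∀ ⦃u w⦄, (G.reduce S).Adj u w → φ u ≠ φ w)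
    (hs : s ∈ S) : InjOn φ (G.neighborSet s \ S) := by
  intro u hu w hw h
  by_contra huw
  exact hφ ⟨hu.2, hw.2, huw, Or.inr ⟨s, hs, hu.1.symm, hw.1⟩⟩ h

theorem pcfAt_of_injOn (h : InjOn ψ (G.neighborSet v)) : G.PCFAt k ψ v :=
  min_le_ncard_uniqueColors_of_injOn h k

theorem injOn_insert_neighborSet (hφ : ∀ ⦃u w⦄, (G.reduce S).Adj u w → φ u ≠ φ w)
    (hψ : EqOn ψ φ Sᶜ) (hs : s ∈ S) (hinj : InjOn ψ S)
    (hdisj : ∀ t ∈ S, t = s ∨ G.Adj s t → ψ t ∉ φ '' (G.neighborSet s \ S)) :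
    InjOn ψ (insert s (G.neighborSet s)) := by
  have hsplit : insert s (G.neighborSet s) ⊆
      (S ∩ insert s (G.neighborSet s)) ∪ (G.neighborSet s \ S) := by
    intro u hu
    by_cases huS : u ∈ S
    · exact Or.inl ⟨huS, hu⟩
    · exact Or.inr ⟨hu.resolve_left (by rintro rfl; exact huS hs), huS⟩
  have hout : EqOn ψ φ (G.neighborSet s \ S) := hψ.mono fun _ hu => hu.2
  refine ((injOn_union (disjoint_sdiff_right.mono_left inter_subset_left)).mpr
    ⟨hinj.mono inter_subset_left, hout.injOn_iff.mpr (injOn_neighborSet_sdiff_of_reduce hφ hs),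
      fun t ht u hu h => hdisj t ht.1 ht.2 ⟨u, hu, (hout hu).symm.trans h.symm⟩⟩).mono hsplit

theorem isPCFColoring_of_reduce (hφ : ∀ ⦃u w⦄, (G.reduce S).Adj u w → φ u ≠ φ w)
    (hψ : EqOn ψ φ Sᶜ) (hS : ∀ s ∈ S, InjOn ψ (insert s (G.neighborSet s)))
    (hout : ∀ v ∉ S, G.PCFAt k ψ v) : G.IsPCFColoring k ψ := by
  refine ⟨fun u w huw h => ?_, fun v => ?_⟩
  · by_cases hu : u ∈ S
    · exact huw.ne (hS u hu (mem_insert u _) (mem_insert_of_mem u huw) h)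
    by_cases hw : w ∈ S
    · exact huw.ne (hS w hw (mem_insert_of_mem w huw.symm) (mem_insert w _) h)
    rw [hψ hu, hψ hw] at h
    exact hφ ⟨hu, hw, huw.ne, Or.inl huw⟩ h
  · by_cases hv : v ∈ S
    · exact pcfAt_of_injOn ((hS v hv).mono (subset_insert _ _))
    · exact hout v hv

theorem pcfAt_of_reduce_of_forall_not_adj (hv : v ∉ S) (h : ∀ s ∈ S, ¬ G.Adj v s)
    (hψ : EqOn ψ φ Sᶜ) (hφ : (G.reduce S).PCFAt k φ v) : G.PCFAt k ψ v := by
  have hN : G.neighborSet v ⊆ Sᶜ := fun u hu huS => h u huS hu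
  unfold PCFAt at hφ ⊢
  rwa [reduce_neighborSet_of_forall_not_adj hv h, ← uniqueColors_congr (hψ.mono hN)] at hφ

variable [Finite V]

theorem exists_forbidden_of_unique_adj (htf : G.CliqueFree 3)
    (hdeg : (G.neighborSet v).ncard ≤ 4) (hv : v ∉ S) (hs : s ∈ S) (hvs : G.Adj v s)
    (huniq : ∀ t ∈ S, G.Adj v t → t = s) (hs2 : (G.neighborSet s \ S).ncard = 2)
    (hφ : (G.reduce S).PCFAt 2 φ v) :
    ∃ F : Finset α, F.card ≤ 2 ∧ ∀ ψ : V → α, EqOn ψ φ Sᶜ → ψ s ∉ F → G.PCFAt 2 ψ v := by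
  have hvs' : v ∈ G.neighborSet s \ S := ⟨hvs.symm, hv⟩
  obtain ⟨u, hp⟩ : ∃ u, (G.neighborSet s \ S) \ {v} = {u} :=
    ncard_eq_one.mp (by rw [ncard_sdiff_singleton_of_mem hvs', hs2])
  obtain ⟨N, hN⟩ : ∃ N, G.neighborSet v \ {s} = N := ⟨_, rfl⟩
  have hNS : N ⊆ Sᶜ := hN ▸ fun t ht htS => ht.2 (huniq t htS ht.1)
  have hsN : s ∉ N := hN ▸ fun h => h.2 rfl
  have hG : G.neighborSet v = insert s N := by
    rw [← hN, insert_sdiff_singleton, insert_eq_of_mem (show s ∈ G.neighborSet v from hvs)]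
  have hsu : G.Adj s u := (hp.symm ▸ mem_singleton u : u ∈ (G.neighborSet s \ S) \ {v}).1.1
  have huN : u ∉ N := fun h => not_adj_of_cliqueFree_three htf hvs.symm hsu (hN ▸ h).1
  have hN3 : N.ncard ≤ 3 := by
    rw [hG, ncard_insert_of_notMem hsN] at hdeg; omega
  unfold PCFAt at hφ
  rw [reduce_neighborSet_of_unique_adj hv hs hvs huniq, hp, hN, union_singleton,
    ncard_insert_of_notMem huN] at hφ
  obtain ⟨F, hF, hFψ⟩ := exists_forbidden_finset_of_insert φ hN3 hφ
  refine ⟨F, hF, fun ψ hψ hψs => ?_⟩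
  unfold PCFAt
  rw [hG, ncard_insert_of_notMem hsN]
  exact hFψ ψ s (hψ.mono hNS) hψs

theorem pcfAt_of_reduce_of_unique_adj_of_ncard_eq_four (hv : v ∉ S) (hs : s ∈ S)
    (hvs : G.Adj v s) (huniq : ∀ t ∈ S, G.Adj v t → t = s)
    (hp : (G.neighborSet s \ S) \ {v} = ∅) (hdeg : (G.neighborSet v).ncard = 4)
    (hφ : (G.reduce S).PCFAt 2 φ v) (hψ : EqOn ψ φ Sᶜ) : G.PCFAt 2 ψ v := by
  obtain ⟨N, hN⟩ : ∃ N, G.neighborSet v \ {s} = N := ⟨_, rfl⟩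
  have hNS : N ⊆ Sᶜ := hN ▸ fun t ht htS => ht.2 (huniq t htS ht.1)
  have hsN : s ∉ N := hN ▸ fun h => h.2 rfl
  have hG : G.neighborSet v = insert s N := by
    rw [← hN, insert_sdiff_singleton, insert_eq_of_mem (show s ∈ G.neighborSet v from hvs)]
  have hN3 : N.ncard = 3 := by
    rw [hG, ncard_insert_of_notMem hsN] at hdeg; omega
  unfold PCFAt at hφ ⊢
  rw [reduce_neighborSet_of_unique_adj hv hs hvs huniq, hp, hN, union_empty, hN3] at hφ
  have hinj : InjOn φ N := by
    by_contra h
    have := ncard_uniqueColors_add_two_le_of_not_injOn h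
    omega
  have := ncard_uniqueColors_le_insert_add_one (f := ψ) (N := N) (p := s)
  rw [uniqueColors_congr (hψ.mono hNS), ncard_uniqueColors_of_injOn hinj] at this
  rw [hdeg, hG]
  omega

theorem exists_forbidden_of_adj_adj (hdeg : (G.neighborSet v).ncard ≤ 4) (hvs : G.Adj v s)
    (hvt : G.Adj v t) (hst : s ≠ t) (hS : G.neighborSet v \ {s, t} ⊆ Sᶜ) (φ : V → α) :
    ∃ F : Finset α, F.card ≤ 2 ∧ ∀ ψ : V → α, EqOn ψ φ Sᶜ → ψ s ∉ F → ψ t ∉ F → ψ s ≠ ψ t →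
      G.PCFAt 2 ψ v := by
  have hst_sub : {s, t} ⊆ G.neighborSet v := insert_subset hvs (singleton_subset_iff.mpr hvt)
  obtain ⟨N, hN⟩ : ∃ N, G.neighborSet v \ {s, t} = N := ⟨_, rfl⟩
  have hG : G.neighborSet v = insert s (insert t N) := by
    ext u
    simp only [← hN, mem_insert_iff, mem_sdiff, mem_neighborSet]
    grind
  have hN2 : N.ncard ≤ 2 := by
    have := ncard_sdiff_add_ncard_of_subset hst_sub
    rw [ncard_pair hst, hN] at this; omega
  refine ⟨(toFinite (φ '' N)).toFinset, ?_, fun ψ hψ hψs hψt hst' => ?_⟩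
  · rw [← ncard_eq_toFinset_card _ (toFinite _)]
    exact (ncard_image_le (toFinite N)).trans hN2
  · rw [Finite.mem_toFinset, ← (hψ.mono (hN ▸ hS)).image_eq] at hψs hψt
    unfold PCFAt
    rw [hG]
    exact (min_le_left _ _).trans (two_le_ncard_uniqueColors_insert_insert hψs hψt hst')

theorem ncard_neighborSet_sdiff_triple (htf : G.CliqueFree 3) {x y z : V} (hxy : G.Adj x y)
    (hyz : G.Adj y z) (hdx : (G.neighborSet x).ncard = 3) (hdz : (G.neighborSet z).ncard = 3) :
    (G.neighborSet x \ {x, y, z}).ncard = 2 ∧ (G.neighborSet z \ {x, y, z}).ncard = 2 := by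
  have key : ∀ {u w}, G.Adj u y → G.Adj y w → (G.neighborSet u).ncard = 3 →
      (G.neighborSet u \ {u, y, w}).ncard = 2 := by
    intro u w huy hyw hdu
    have hu : G.neighborSet u ∩ {u, y, w} = {y} := by
      ext t
      refine ⟨?_, by rintro rfl; exact ⟨huy, by simp⟩⟩
      rintro ⟨ht, rfl | rfl | rfl⟩
      exacts [(G.loopless.irrefl _ ht).elim, rfl,
        (not_adj_of_cliqueFree_three htf huy.symm hyw ht).elim]
    have := ncard_inter_add_ncard_sdiff_eq_ncard (G.neighborSet u) {u, y, w}
    rw [hu, ncard_singleton, hdu] at this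
    omega
  have hS : ({z, y, x} : Set V) = {x, y, z} := by
    ext; simp only [mem_insert_iff, mem_singleton_iff]; tauto
  exact ⟨key hxy hyz hdx, hS ▸ key hyz.symm hxy.symm hdz⟩

theorem neighborSet_sdiff_triple_eq_singleton {x y z y₁ : V} (hxy : G.Adj x y)
    (hyz : G.Adj y z) (hyy₁ : G.Adj y y₁) (hxz : x ≠ z) (hy₁x : y₁ ≠ x) (hy₁z : y₁ ≠ z)
    (hdy : (G.neighborSet y).ncard = 3) : G.neighborSet y \ {x, y, z} = {y₁} := by
  have hN : G.neighborSet y = {x, z, y₁} := .symm <| eq_of_subset_of_ncard_le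
    (by rintro t (rfl | rfl | rfl); exacts [hxy.symm, hyz, hyy₁])
    (by rw [hdy, ncard_insert_of_notMem (by simp [hxz, hy₁x.symm]), ncard_pair hy₁z.symm])
  ext t
  simp only [hN, mem_sdiff, mem_insert_iff, mem_singleton_iff]
  grind [hyy₁.ne']

theorem exists_forbidden_colors_of_path (htf : G.CliqueFree 3) {x y z y₁ : V}
    (hφ : (G.reduce {x, y, z}).IsPCFColoring 2 φ) (hxy : G.Adj x y) (hyz : G.Adj y z)
    (hxz : x ≠ z) (hx : (G.neighborSet x \ {x, y, z}).ncard = 2)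
    (hy : G.neighborSet y \ {x, y, z} = {y₁}) (hz : (G.neighborSet z \ {x, y, z}).ncard = 2)
    (hdy₁ : (G.neighborSet y₁).ncard = 4) (hdeg : (G.neighborSet v).ncard ≤ 4) :
    ∃ F : Finset α, F.card ≤ 2 ∧ (v ∉ ({x, y, z} : Set V) → ∀ ψ : V → α,
      EqOn ψ φ {x, y, z}ᶜ → ψ x ≠ ψ z → (G.Adj v x → ψ x ∉ F) → (G.Adj v z → ψ z ∉ F) →
        G.PCFAt 2 ψ v) := by
  by_cases hv : v ∈ ({x, y, z} : Set V)
  · exact ⟨∅, by simp, fun h => (h hv).elim⟩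
  by_cases hvy : G.Adj v y
  · obtain rfl : v = y₁ := by
      have : v ∈ G.neighborSet y \ {x, y, z} := ⟨hvy.symm, hv⟩
      rwa [hy] at this
    have huniq : ∀ t ∈ ({x, y, z} : Set V), G.Adj v t → t = y := by
      rintro t (rfl | rfl | rfl) ht
      exacts [(not_adj_of_cliqueFree_three htf hxy.symm hvy.symm ht.symm).elim, rfl,
        (not_adj_of_cliqueFree_three htf hyz hvy.symm ht.symm).elim]
    refine ⟨∅, by simp, fun _ ψ hψ _ _ _ => ?_⟩
    exact pcfAt_of_reduce_of_unique_adj_of_ncard_eq_four hv (by simp) hvy huniq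
      (by rw [hy, Set.sdiff_self]) hdy₁ (hφ.2 v) hψ
  by_cases hvx : G.Adj v x <;> by_cases hvz : G.Adj v z
  · have hS : G.neighborSet v \ {x, z} ⊆ ({x, y, z} : Set V)ᶜ := by
      rintro u ⟨hu, hxz'⟩ (rfl | rfl | rfl)
      exacts [hxz' (Or.inl rfl), hvy hu, hxz' (Or.inr rfl)]
    obtain ⟨F, hF, hFψ⟩ := exists_forbidden_of_adj_adj hdeg hvx hvz hxz hS φ
    exact ⟨F, hF, fun _ ψ hψ hψxz h₁ h₂ => hFψ ψ hψ (h₁ hvx) (h₂ hvz) hψxz⟩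
  · have huniq : ∀ t ∈ ({x, y, z} : Set V), G.Adj v t → t = x := by
      rintro t (rfl | rfl | rfl) ht
      exacts [rfl, (hvy ht).elim, (hvz ht).elim]
    obtain ⟨F, hF, hFψ⟩ :=
      exists_forbidden_of_unique_adj htf hdeg hv (by simp) hvx huniq hx (hφ.2 v)
    exact ⟨F, hF, fun _ ψ hψ _ h₁ _ => hFψ ψ hψ (h₁ hvx)⟩
  · have huniq : ∀ t ∈ ({x, y, z} : Set V), G.Adj v t → t = z := by
      rintro t (rfl | rfl | rfl) ht
      exacts [(hvx ht).elim, (hvy ht).elim, rfl]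
    obtain ⟨F, hF, hFψ⟩ :=
      exists_forbidden_of_unique_adj htf hdeg hv (by simp) hvz huniq hz (hφ.2 v)
    exact ⟨F, hF, fun _ ψ hψ _ _ h₂ => hFψ ψ hψ (h₂ hvz)⟩
  · have h : ∀ t ∈ ({x, y, z} : Set V), ¬ G.Adj v t := by
      rintro t (rfl | rfl | rfl)
      exacts [hvx, hvy, hvz]
    exact ⟨∅, by simp, fun _ ψ hψ _ _ _ => pcfAt_of_reduce_of_forall_not_adj hv h hψ (hφ.2 v)⟩

end SimpleGraph

/- Greedy choice in the order `x`, `z`, `y`: the color of `y` has the most room. -/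
theorem exists_eqOn_compl_injOn_triple {V α : Type*} [Fintype α] (φ : V → α) {x y z : V}
    (hxy : x ≠ y) (hyz : y ≠ z) (hxz : x ≠ z) (X Z W : Finset α) (hX : X.card < Fintype.card α)
    (hZ : Z.card + 1 < Fintype.card α) (hW : W.card + 2 < Fintype.card α) :
    ∃ ψ : V → α, EqOn ψ φ {x, y, z}ᶜ ∧ InjOn ψ {x, y, z} ∧ ψ x ∉ X ∧ ψ z ∉ Z ∧ ψ y ∉ W := by
  classical
  obtain ⟨cx, -, hcx⟩ := Finset.exists_mem_notMem_of_card_lt_card (t := Finset.univ) hX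
  obtain ⟨cz, -, hcz⟩ := Finset.exists_mem_notMem_of_card_lt_card (s := insert cx Z)
    (t := Finset.univ) ((Finset.card_insert_le _ _).trans_lt hZ)
  obtain ⟨cy, -, hcy⟩ := Finset.exists_mem_notMem_of_card_lt_card (s := insert cx (insert cz W))
    (t := Finset.univ) (by grw [Finset.card_insert_le, Finset.card_insert_le]; simpa)
  simp only [Finset.mem_insert, not_or] at hcz hcy
  refine ⟨fun v => if v = x then cx else if v = y then cy else if v = z then cz else φ v,
    fun v hv => ?_, ?_, by simpa, by simpa [hxz.symm, hyz.symm] using hcz.2,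
    by simpa [hxy.symm] using hcy.2.2⟩
  · simp only [mem_compl_iff, mem_insert_iff, mem_singleton_iff, not_or] at hv
    simp [hv.1, hv.2.1, hv.2.2]
  · rintro u (rfl | rfl | rfl) v (rfl | rfl | rfl) h <;> simp_all [eq_comm]

theorem reduce_path_three_three_vertices {V : Type*} [Fintype V]
    (G : SimpleGraph V)
    (hΔ : ∀ u : V, {w | G.Adj u w}.ncard ≤ 4)
    (htf : G.CliqueFree 3)
    (x y z y₁ : V)
    (hxy : G.Adj x y) (hyz : G.Adj y z) (hxz : x ≠ z)
    (hdx : {w | G.Adj x w}.ncard = 3)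
    (hdy : {w | G.Adj y w}.ncard = 3)
    (hdz : {w | G.Adj z w}.ncard = 3)
    (hyy₁ : G.Adj y y₁) (hy₁x : y₁ ≠ x) (hy₁z : y₁ ≠ z)
    (hdy₁ : {w | G.Adj y₁ w}.ncard = 4)
    (h : (G.reduce {x, y, z}).HasPCFColoring 2 9) :
    G.HasPCFColoring 2 9 := by
  classical
  obtain ⟨φ, hφ⟩ := h
  obtain ⟨hx₂, hz₂⟩ := SimpleGraph.ncard_neighborSet_sdiff_triple htf hxy hyz hdx hdz
  have hy := SimpleGraph.neighborSet_sdiff_triple_eq_singleton hxy hyz hyy₁ hxz hy₁x hy₁z hdy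
  obtain ⟨a, b, hab, hNx⟩ := ncard_eq_two.mp hx₂
  obtain ⟨c, d, hcd, hNz⟩ := ncard_eq_two.mp hz₂
  choose F hF₂ hF using fun v => SimpleGraph.exists_forbidden_colors_of_path (v := v) htf hφ
    hxy hyz hxz hx₂ hy hz₂ hdy₁ (hΔ v)
  obtain ⟨ψ, hψ, hinj, hψx, hψz, hψy⟩ := exists_eqOn_compl_injOn_triple φ hxy.ne hyz.ne hxz
    ({φ y₁, φ a, φ b} ∪ F a ∪ F b) ({φ y₁, φ c, φ d} ∪ F c ∪ F d) {φ a, φ b, φ c, φ d, φ y₁}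
    (by grw [Finset.card_union_le, Finset.card_union_le, Finset.card_le_three, hF₂, hF₂]; simp)
    (by grw [Finset.card_union_le, Finset.card_union_le, Finset.card_le_three, hF₂, hF₂]; simp)
    (by grw [Finset.card_le_five]; simp)
  refine ⟨ψ, SimpleGraph.isPCFColoring_of_reduce hφ.1 hψ
    (fun s hs => SimpleGraph.injOn_insert_neighborSet hφ.1 hψ hs hinj ?_)
    fun v hv => hF v hv ψ hψ (hinj.ne (by simp) (by simp) hxz) (fun hvx => ?_) fun hvz => ?_⟩
  · have hxz' : ¬ G.Adj x z := SimpleGraph.not_adj_of_cliqueFree_three htf hxy.symm hyz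
    have hzx' : ¬ G.Adj z x := fun h => hxz' h.symm
    rcases hs with rfl | rfl | rfl <;> rintro t (rfl | rfl | rfl) hst <;> simp_all [image_pair]
  · rcases (hNx ▸ ⟨hvx.symm, hv⟩ : v ∈ ({a, b} : Set V)) with rfl | rfl <;> simp_all
  · rcases (hNz ▸ ⟨hvz.symm, hv⟩ : v ∈ ({c, d} : Set V)) with rfl | rfl <;> simp_all
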